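/- Fix δ ≥ 0. If the reachability intervals R_i[j] and R'_j[i] are both empty, then R_{i+1}[j] and R'_{j+1}[i] are both empty. Formally: if no point y ∈ w_j w_{j+1} satisfies d_F(τ[v_1,v_i], σ[w_1,y]) ≤ δ and no point x ∈ v_i v_{i+1} satisfies d_F(τ[v_1,x], σ[w_1,w_j]) ≤ δ, then no point y ∈ w_j w_{j+1} satisfies d_F(τ[v_1,v_{i+1}], σ[w_1,y]) ≤ δ and no point x ∈ v_i v_{i+1} satisfies d_F(τ[v_1,x], σ[w_1,w_{j+1}]) ≤ δ. -/

import Mathlib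

/-!
Take a matching of `τ[v₀, v_{i+1}]` with `σ[w₀, y]` of width `c` and look at the moment when
`v_i` is reached. Either `σ` is by then on its last edge, at some `y'`, and the matching up to
that moment, reparametrized, shows `d_F(τ[v₀, v_i], σ[w₀, y']) ≤ c`; or `w_j` is reached
later, at some `x'` on the edge `v_i v_{i+1}`, and symmetrically
`d_F(τ[v₀, x'], σ[w₀, w_j]) ≤ c`.

The Fréchet distance is an infimum that need not be attained, so the hypotheses are used
quantitatively: both distances are 1-Lipschitz in the free endpoint, hence stay above some
`r > δ` on the compact edges, and by the dichotomy every matching has width at least `r`.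
-/

open scoped RealInnerProductSpace

/-- Piecewise-linear (polygonal) curve with `n` edges and vertices `v 0, ..., v n`,
parameterized on `[0,1]`. -/
noncomputable def polyline {E : Type*} [NormedAddCommGroup E] [NormedSpace ℝ E]
    (n : ℕ) (v : ℕ → E) (s : ℝ) : E :=
  let u : ℝ := s * n
  let i : ℕ := min (n - 1) (⌊u⌋.toNat)
  (1 - (u - i)) • v i + (u - i) • v (i + 1)

/-- A reparameterization of `[0,1]`: continuous, monotone, fixing the endpoints. -/
def IsReparam (φ : ℝ → ℝ) : Prop :=
  Continuous φ ∧ Monotone φ ∧ φ 0 = 0 ∧ φ 1 = 1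

/-- The Fréchet distance between two curves `f g : ℝ → E` (regarded as parameterized
on `[0,1]`): the infimum of the bounds `δ` achieved by some pair of matched
reparameterizations. -/
noncomputable def frechetDist {E : Type*} [NormedAddCommGroup E] [NormedSpace ℝ E]
    (f g : ℝ → E) : ℝ :=
  sInf {δ : ℝ | 0 ≤ δ ∧ ∃ φ ψ : ℝ → ℝ, IsReparam φ ∧ IsReparam ψ ∧
    ∀ t ∈ Set.Icc (0:ℝ) 1, dist (f (φ t)) (g (ψ t)) ≤ δ}

/-- Vertices of the subcurve `τ[v 0, x]` where `x` lies on the edge from `v i` to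
`v (i+1)`: the vertices `v 0, ..., v i` followed by `x`. -/
def subVert {E : Type*} (v : ℕ → E) (i : ℕ) (x : E) : ℕ → E :=
  fun k => if k ≤ i then v k else x

open Set AffineMap

section SubVert

variable {E : Type*}

theorem subVert_of_le (v : ℕ → E) {n k : ℕ} (x : E) (hk : k ≤ n) : subVert v n x k = v k :=
  if_pos hk

@[simp]
theorem subVert_succ (v : ℕ → E) (n : ℕ) (x : E) : subVert v n x (n + 1) = x :=
  if_neg (by omega)

@[simp]
theorem subVert_subVert (v : ℕ → E) (n : ℕ) (x y : E) :
    subVert (subVert v n x) n y = subVert v n y := by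
  funext k
  by_cases hk : k ≤ n <;> simp [subVert, hk]

end SubVert

section Polyline

variable {E : Type*} [NormedAddCommGroup E] [NormedSpace ℝ E]

theorem polyline_zero (v : ℕ → E) (s : ℝ) : polyline 0 v s = v 0 := by
  simp [polyline]

theorem polyline_congr {n : ℕ} {v v' : ℕ → E} (h : ∀ k ≤ n, v k = v' k) :
    polyline n v = polyline n v' := by
  funext s
  rcases n with _ | n
  · rw [polyline_zero, polyline_zero, h 0 le_rfl]
  · simp only [polyline]
    rw [h _ (by omega), h _ (by omega)]

theorem polyline_subVert (v : ℕ → E) (n : ℕ) (x : E) : polyline n (subVert v n x) = polyline n v :=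
  polyline_congr fun _ hk => subVert_of_le v x hk

theorem polyline_subVert_succ (v : ℕ → E) (n : ℕ) :
    polyline (n + 1) (subVert v n (v (n + 1))) = polyline (n + 1) v :=
  polyline_congr fun k hk => by
    rcases hk.lt_or_eq with hk | rfl
    · exact subVert_of_le v _ (by omega)
    · exact subVert_succ v n _

theorem polyline_add_div {n k : ℕ} (v : ℕ → E) (hk : k < n) {t : ℝ} (ht : t ∈ Icc (0:ℝ) 1) :
    polyline n v ((k + t) / n) = lineMap (v k) (v (k + 1)) t := by
  have hn : (n : ℝ) ≠ 0 := Nat.cast_ne_zero.2 (by omega)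
  simp only [polyline, div_mul_cancel₀ _ hn, lineMap_apply_module]
  rcases ht.2.lt_or_eq with ht1 | rfl
  · have hfloor : ⌊(k : ℝ) + t⌋.toNat = k := by
      rw [(Int.floor_eq_iff (z := k)).2 ⟨by push_cast; linarith [ht.1], by push_cast; linarith⟩]
      simp
    rw [hfloor, min_eq_right (by omega), add_sub_cancel_left]
  · have hfloor : ⌊(k : ℝ) + 1⌋.toNat = k + 1 := by
      rw [show (k : ℝ) + 1 = ((k + 1 : ℕ) : ℤ) by push_cast; ring, Int.floor_intCast]
      simp
    rw [hfloor]
    rcases (Nat.succ_le_of_lt hk).lt_or_eq with hlt | rfl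
    · rw [min_eq_right (by omega)]
      push_cast
      simp
    · rw [min_eq_left (by omega), Nat.succ_sub_one]
      simp

theorem exists_eq_add_div {n : ℕ} (hn : 0 < n) {s : ℝ} (hs : s ∈ Icc (0:ℝ) 1) :
    ∃ k < n, ∃ t ∈ Icc (0:ℝ) 1, s = (k + t) / n := by
  have hn' : (0 : ℝ) < n := Nat.cast_pos.2 hn
  have hsn : 0 ≤ s * n := mul_nonneg hs.1 hn'.le
  refine ⟨min (n - 1) ⌊s * n⌋₊, by omega, s * n - (min (n - 1) ⌊s * n⌋₊ : ℕ), ⟨?_, ?_⟩,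
    by field_simp; ring⟩
  · have : ((min (n - 1) ⌊s * n⌋₊ : ℕ) : ℝ) ≤ ⌊s * n⌋₊ := Nat.cast_le.2 (min_le_right _ _)
    linarith [Nat.floor_le hsn]
  · rcases min_cases (n - 1) ⌊s * n⌋₊ with ⟨h, _⟩ | ⟨h, _⟩ <;> rw [h]
    · rw [Nat.cast_sub hn]
      push_cast
      nlinarith [hs.2]
    · linarith [Nat.lt_floor_add_one (s * n)]

theorem polyline_mul_div_succ (v : ℕ → E) (n : ℕ) {s : ℝ} (hs : s ∈ Icc (0:ℝ) 1) :
    polyline (n + 1) v (s * (n / (n + 1))) = polyline n v s := by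
  rcases n.eq_zero_or_pos with rfl | hn
  · simpa [polyline_zero] using polyline_add_div v zero_lt_one (left_mem_Icc.2 zero_le_one)
  obtain ⟨k, hk, t, ht, rfl⟩ := exists_eq_add_div hn hs
  have hn' : (n : ℝ) ≠ 0 := Nat.cast_ne_zero.2 hn.ne'
  have hs' : (k + t) / n * (n / (n + 1)) = (k + t) / ((n + 1 : ℕ) : ℝ) := by
    push_cast
    field_simp
  rw [hs', polyline_add_div v (by omega) ht, polyline_add_div v hk ht]

theorem polyline_succ_eq_lineMap (v : ℕ → E) (n : ℕ) {s : ℝ}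
    (hs : s ∈ Icc (n / (n + 1) : ℝ) 1) :
    polyline (n + 1) v s = lineMap (v n) (v (n + 1)) ((n + 1) * s - n) := by
  have hn : (0 : ℝ) < n + 1 := by positivity
  have ht : (n + 1) * s - n ∈ Icc (0:ℝ) 1 := by
    have := (div_le_iff₀ hn).1 hs.1
    constructor <;> nlinarith [hs.2]
  rw [← polyline_add_div v (Nat.lt_succ_self n) ht]
  congr 1
  push_cast
  field_simp
  ring

theorem polyline_succ_mem_segment (v : ℕ → E) (n : ℕ) {s : ℝ}
    (hs : s ∈ Icc (n / (n + 1) : ℝ) 1) :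
    polyline (n + 1) v s ∈ segment ℝ (v n) (v (n + 1)) := by
  have hn : (0 : ℝ) < n + 1 := by positivity
  rw [polyline_succ_eq_lineMap v n hs]
  refine lineMap_mem_segment ℝ _ _ ?_
  have := (div_le_iff₀ hn).1 hs.1
  constructor <;> nlinarith [hs.2]

theorem polyline_subVert_lineMap (v : ℕ → E) (n : ℕ) {μ : ℝ} (hμ : μ ∈ Icc (0:ℝ) 1) {p : ℝ}
    (hp : p ∈ Icc (0:ℝ) 1) :
    polyline (n + 1) (subVert v n (lineMap (v n) (v (n + 1)) μ)) p =
      polyline (n + 1) v (min p (n / (n + 1)) + μ * max (p - n / (n + 1)) 0) := by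
  have hn : (0 : ℝ) < n + 1 := by positivity
  obtain ⟨k, hk, t, ht, rfl⟩ := exists_eq_add_div (by omega : 0 < n + 1) hp
  rw [polyline_add_div _ hk ht]
  rcases (Nat.lt_succ_iff.1 hk).lt_or_eq with hkn | rfl
  · have hkn' : (k : ℝ) + 1 ≤ n := by exact_mod_cast hkn
    have hle : (k + t) / ((n + 1 : ℕ) : ℝ) ≤ (n / (n + 1) : ℝ) := by
      push_cast
      gcongr
      linarith [ht.2]
    rw [min_eq_left hle, max_eq_right (by linarith), mul_zero, add_zero,
      polyline_add_div v hk ht, subVert_of_le v _ hkn.le, subVert_of_le v _ hkn]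
  · have htμ : t * μ ∈ Icc (0:ℝ) 1 :=
      ⟨mul_nonneg ht.1 hμ.1, mul_le_one₀ ht.2 hμ.1 hμ.2⟩
    have harg : min ((k + t) / ((k + 1 : ℕ) : ℝ)) (k / (k + 1)) +
        μ * max ((k + t) / ((k + 1 : ℕ) : ℝ) - k / (k + 1)) 0 =
          (k + t * μ) / ((k + 1 : ℕ) : ℝ) := by
      push_cast
      have hsub : (k + t) / (k + 1) - k / (k + 1) = t / (k + 1) := by ring
      rw [min_eq_right (by gcongr; linarith [ht.1]), hsub, max_eq_left (div_nonneg ht.1 hn.le)]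
      ring
    rw [harg, polyline_add_div v hk htμ, subVert_of_le v _ le_rfl, subVert_succ,
      lineMap_lineMap_right]

theorem dist_polyline_le {n : ℕ} {v v' : ℕ → E} {K : ℝ} (hK : ∀ k ≤ n, dist (v k) (v' k) ≤ K)
    {s : ℝ} (hs : s ∈ Icc (0:ℝ) 1) : dist (polyline n v s) (polyline n v' s) ≤ K := by
  rcases n.eq_zero_or_pos with rfl | hn
  · rw [polyline_zero, polyline_zero]
    exact hK 0 le_rfl
  obtain ⟨k, hk, t, ht, rfl⟩ := exists_eq_add_div hn hs
  rw [polyline_add_div v hk ht, polyline_add_div v' hk ht, dist_eq_norm_vsub E,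
    lineMap_vsub_lineMap, ← mem_closedBall_zero_iff]
  refine (convex_closedBall 0 K).lineMap_mem ?_ ?_ ht <;>
    rw [mem_closedBall_zero_iff, vsub_eq_sub, ← dist_eq_norm]
  · exact hK k hk.le
  · exact hK (k + 1) hk

theorem dist_polyline_subVert_le (v : ℕ → E) (n : ℕ) (x x' : E) {s : ℝ}
    (hs : s ∈ Icc (0:ℝ) 1) :
    dist (polyline (n + 1) (subVert v n x) s) (polyline (n + 1) (subVert v n x') s) ≤ dist x x' :=
  dist_polyline_le (fun k hk => by
    rcases hk.lt_or_eq with hk | rfl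
    · rw [subVert_of_le v _ (by omega), subVert_of_le v _ (by omega), dist_self]
      exact dist_nonneg
    · rw [subVert_succ, subVert_succ]) hs

theorem exists_norm_polyline_le (n : ℕ) (v : ℕ → E) :
    ∃ R, ∀ s ∈ Icc (0:ℝ) 1, ‖polyline n v s‖ ≤ R := by
  refine ⟨∑ k ∈ Finset.range (n + 1), ‖v k‖, fun s hs => ?_⟩
  have hzero : polyline n (0 : ℕ → E) s = 0 := by simp [polyline]
  rw [← dist_zero_right, ← hzero]
  refine dist_polyline_le (fun k hk => ?_) hs
  rw [Pi.zero_apply, dist_zero_right]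
  exact Finset.single_le_sum (f := fun k => ‖v k‖) (fun _ _ => norm_nonneg _)
    (Finset.mem_range.2 (by omega))

end Polyline

theorem isReparam_id : IsReparam id := ⟨continuous_id, monotone_id, rfl, rfl⟩

theorem isReparam_min_two_mul : IsReparam fun t => min (2 * t) 1 :=
  ⟨by fun_prop, fun _ _ hab => min_le_min (by linarith) le_rfl, by norm_num, by norm_num⟩

theorem IsReparam.comp {φ ψ : ℝ → ℝ} (hφ : IsReparam φ) (hψ : IsReparam ψ) :
    IsReparam (φ ∘ ψ) :=
  ⟨hφ.1.comp hψ.1, hφ.2.1.comp hψ.2.1, by simp [hψ.2.2.1, hφ.2.2.1],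
    by simp [hψ.2.2.2, hφ.2.2.2]⟩

theorem IsReparam.mapsTo {φ : ℝ → ℝ} (hφ : IsReparam φ) : MapsTo φ (Icc 0 1) (Icc 0 1) :=
  fun _ ht => ⟨hφ.2.2.1 ▸ hφ.2.1 ht.1, hφ.2.2.2 ▸ hφ.2.1 ht.2⟩

theorem IsReparam.surjOn {φ : ℝ → ℝ} (hφ : IsReparam φ) : SurjOn φ (Icc 0 1) (Icc 0 1) := by
  intro b hb
  rw [← hφ.2.2.1, ← hφ.2.2.2] at hb
  exact intermediate_value_Icc zero_le_one hφ.1.continuousOn hb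

section Matching

variable {E : Type*} [PseudoMetricSpace E]

def MatchableWithin (f g : ℝ → E) (c : ℝ) : Prop :=
  ∃ φ ψ : ℝ → ℝ, IsReparam φ ∧ IsReparam ψ ∧ ∀ t ∈ Icc (0:ℝ) 1, dist (f (φ t)) (g (ψ t)) ≤ c

theorem MatchableWithin.symm {f g : ℝ → E} {c : ℝ} (h : MatchableWithin f g c) :
    MatchableWithin g f c :=
  let ⟨φ, ψ, hφ, hψ, hc⟩ := h
  ⟨ψ, φ, hψ, hφ, fun t ht => dist_comm (f (φ t)) (g (ψ t)) ▸ hc t ht⟩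

theorem MatchableWithin.of_comp_left {f f₀ g : ℝ → E} {c : ℝ} {ρ : ℝ → ℝ}
    (h : MatchableWithin f g c) (hρc : Continuous ρ) (hρm : Monotone ρ) (hρ0 : ρ 0 = 0)
    (hρ1 : ρ 1 ≤ 1) (hf : ∀ t ∈ Icc (0:ℝ) 1, f t = f₀ (ρ t))
    (htail : ∀ s ∈ Icc (ρ 1) 1, f₀ s = f₀ (ρ 1)) : MatchableWithin f₀ g c := by
  obtain ⟨φ, ψ, hφ, hψ, hc⟩ := h
  set σ : ℝ → ℝ := fun t => min (2 * t) 1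
  -- Follow the given matching at double speed, then let `f₀` run through its constant tail
  -- while `g` waits at its endpoint.
  set φ₀ : ℝ → ℝ := fun t => ρ (φ (σ t)) + max (2 * t - 1) 0 * (1 - ρ 1)
  have hρ1' : 0 ≤ 1 - ρ 1 := sub_nonneg.2 hρ1
  have hφ₀ : IsReparam φ₀ := by
    have hφc := hφ.1
    refine ⟨by simp only [φ₀, σ]; fun_prop, fun a b hab =>
      add_le_add (hρm (hφ.2.1 (isReparam_min_two_mul.2.1 hab)))
        (mul_le_mul_of_nonneg_right (max_le_max (by linarith) le_rfl) hρ1'), ?_, ?_⟩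
    · simp [φ₀, σ, hφ.2.2.1, hρ0]
    · simp only [φ₀, σ]
      norm_num [hφ.2.2.2]
  refine ⟨φ₀, ψ ∘ σ, hφ₀, hψ.comp isReparam_min_two_mul, fun t ht => ?_⟩
  have hσt : σ t ∈ Icc (0:ℝ) 1 := isReparam_min_two_mul.mapsTo ht
  suffices f₀ (φ₀ t) = f (φ (σ t)) from this ▸ hc _ hσt
  rcases le_or_gt t (1 / 2) with ht2 | ht2
  · simp only [φ₀, max_eq_right (by linarith : 2 * t - 1 ≤ 0), zero_mul, add_zero]
    exact (hf _ (hφ.mapsTo hσt)).symm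
  · have hσ1 : σ t = 1 := min_eq_right (by linarith)
    rw [hσ1, hφ.2.2.2, hf 1 (right_mem_Icc.2 zero_le_one)]
    refine htail _ ⟨?_, ?_⟩ <;>
      simp only [φ₀, hσ1, hφ.2.2.2, max_eq_left (by linarith : 0 ≤ 2 * t - 1)]
    · nlinarith
    · nlinarith [ht.2]

theorem MatchableWithin.of_comp_rightInverse {F P g : ℝ → E} {c : ℝ} {α η κ : ℝ → ℝ}
    (hm : MatchableWithin (F ∘ α) g c) (hαc : Continuous α) (hαm : Monotone α) (hα0 : α 0 = 0)
    (hP : ∀ p ∈ Icc (0:ℝ) 1, P p = F (η p)) (hη : Monotone η) (hη1 : η 1 = α 1)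
    (hκc : Continuous κ) (hκm : Monotone κ) (hκ0 : κ 0 = 0) (hκ1 : κ (α 1) ≤ 1)
    (hηκ : ∀ x ∈ Icc 0 (α 1), η (κ x) = x) : MatchableWithin P g c := by
  have hκα : ∀ t ∈ Icc (0:ℝ) 1, κ (α t) ∈ Icc (0:ℝ) 1 ∧ η (κ (α t)) = α t := fun t ht =>
    have hαt : α t ∈ Icc 0 (α 1) := ⟨hα0 ▸ hαm ht.1, hαm ht.2⟩
    ⟨⟨hκ0 ▸ hκm hαt.1, (hκm hαt.2).trans hκ1⟩, hηκ _ hαt⟩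
  obtain ⟨hκα1, hηκα1⟩ := hκα 1 (right_mem_Icc.2 zero_le_one)
  refine hm.of_comp_left (hκc.comp hαc) (hκm.comp hαm) (by simp [hα0, hκ0]) hκ1
    (fun t ht => ?_) fun s hs => ?_
  · simp [hP _ (hκα t ht).1, (hκα t ht).2]
  · have hs' : η s = α 1 := le_antisymm (hη1 ▸ hη hs.2) (hηκα1 ▸ hη hs.1)
    simp [hP s ⟨hκα1.1.trans hs.1, hs.2⟩, hP _ hκα1, hηκα1, hs']

end Matching

section FrechetDist

variable {E : Type*} [NormedAddCommGroup E] [NormedSpace ℝ E]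

theorem frechetDist_eq_sInf (f g : ℝ → E) :
    frechetDist f g = sInf {c | 0 ≤ c ∧ MatchableWithin f g c} := rfl

theorem frechetDist_comm (f g : ℝ → E) : frechetDist f g = frechetDist g f := by
  simp only [frechetDist_eq_sInf]
  congr 1
  ext c
  exact and_congr_right fun _ => ⟨MatchableWithin.symm, MatchableWithin.symm⟩

theorem frechetDist_le {f g : ℝ → E} {c : ℝ} (h : MatchableWithin f g c) (hc : 0 ≤ c) :
    frechetDist f g ≤ c :=
  csInf_le ⟨0, fun _ hc' => hc'.1⟩ ⟨hc, h⟩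

theorem le_frechetDist {f g : ℝ → E} {b : ℝ} (hne : ∃ c, 0 ≤ c ∧ MatchableWithin f g c)
    (h : ∀ c, 0 ≤ c → MatchableWithin f g c → b ≤ c) : b ≤ frechetDist f g :=
  le_csInf hne fun c hc => h c hc.1 hc.2

theorem exists_matchableWithin_polyline (n m : ℕ) (v w : ℕ → E) :
    ∃ c, 0 ≤ c ∧ MatchableWithin (polyline n v) (polyline m w) c := by
  obtain ⟨R, hR⟩ := exists_norm_polyline_le n v
  obtain ⟨R', hR'⟩ := exists_norm_polyline_le m w
  have hR0 : 0 ≤ R := (norm_nonneg _).trans (hR 0 (left_mem_Icc.2 zero_le_one))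
  have hR'0 : 0 ≤ R' := (norm_nonneg _).trans (hR' 0 (left_mem_Icc.2 zero_le_one))
  exact ⟨R + R', add_nonneg hR0 hR'0, id, id, isReparam_id, isReparam_id, fun t ht =>
    (dist_le_norm_add_norm _ _).trans (add_le_add (hR t ht) (hR' t ht))⟩

theorem frechetDist_le_frechetDist_add {f g g' : ℝ → E} {K : ℝ}
    (hne : ∃ c, 0 ≤ c ∧ MatchableWithin f g' c) (hK : ∀ t ∈ Icc (0:ℝ) 1, dist (g t) (g' t) ≤ K) :
    frechetDist f g ≤ frechetDist f g' + K := by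
  have hK0 : 0 ≤ K := dist_nonneg.trans (hK 0 (left_mem_Icc.2 zero_le_one))
  rw [← sub_le_iff_le_add]
  refine le_frechetDist hne fun c hc ⟨φ, ψ, hφ, hψ, hfg'⟩ => sub_le_iff_le_add.2 ?_
  refine frechetDist_le ⟨φ, ψ, hφ, hψ, fun t ht => ?_⟩ (add_nonneg hc hK0)
  calc dist (f (φ t)) (g (ψ t)) ≤ dist (f (φ t)) (g' (ψ t)) + dist (g' (ψ t)) (g (ψ t)) :=
        dist_triangle _ _ _
    _ ≤ c + K := add_le_add (hfg' t ht) (dist_comm (g (ψ t)) _ ▸ hK _ (hψ.mapsTo ht))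

theorem continuous_frechetDist_polyline_subVert (p : ℕ) (u : ℕ → E) (n : ℕ) (w : ℕ → E) :
    Continuous fun y => frechetDist (polyline p u) (polyline (n + 1) (subVert w n y)) :=
  (LipschitzWith.of_le_add fun _ _ =>
    frechetDist_le_frechetDist_add (exists_matchableWithin_polyline _ _ _ _) fun _ ht =>
      dist_polyline_subVert_le w n _ _ ht).continuous

theorem continuous_frechetDist_subVert_polyline (n : ℕ) (v : ℕ → E) (p : ℕ) (u : ℕ → E) :
    Continuous fun x => frechetDist (polyline (n + 1) (subVert v n x)) (polyline p u) := by
  simpa only [frechetDist_comm] using continuous_frechetDist_polyline_subVert p u n v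

end FrechetDist

section Prefix

variable {E : Type*} [NormedAddCommGroup E] [NormedSpace ℝ E]

theorem MatchableWithin.of_polyline_succ_comp {n : ℕ} {v : ℕ → E} {g : ℝ → E} {c : ℝ}
    {α : ℝ → ℝ} (hm : MatchableWithin (polyline (n + 1) v ∘ α) g c) (hαc : Continuous α)
    (hαm : Monotone α) (hα0 : α 0 = 0) (hα1 : α 1 = n / (n + 1)) :
    MatchableWithin (polyline n v) g c := by
  have hB : (0:ℝ) ≤ n / (n + 1) := by positivity
  -- For `n = 0` the right inverse `x / 0` is the constant `0`, and `polyline 0 v` is constant.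
  refine hm.of_comp_rightInverse hαc hαm hα0 (η := fun p => p * (n / (n + 1)))
    (κ := fun x => x / (n / (n + 1))) (fun p hp => (polyline_mul_div_succ v n hp).symm)
    (monotone_mul_right_of_nonneg hB) (by simp [hα1]) (by fun_prop)
    (monotone_div_right_of_nonneg hB) (zero_div _) (by rw [hα1]; exact div_self_le_one _)
    fun x hx => ?_
  rcases hB.eq_or_lt with hB0 | hB0
  · rw [hα1, ← hB0] at hx
    simp [le_antisymm hx.2 hx.1]
  · exact div_mul_cancel₀ x hB0.ne'

theorem MatchableWithin.of_polyline_succ_comp_subVert {n : ℕ} {v : ℕ → E} {g : ℝ → E} {c : ℝ}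
    {α : ℝ → ℝ} (hm : MatchableWithin (polyline (n + 1) v ∘ α) g c) (hαc : Continuous α)
    (hαm : Monotone α) (hα0 : α 0 = 0) (hα1 : α 1 ∈ Icc (n / (n + 1) : ℝ) 1) :
    MatchableWithin (polyline (n + 1) (subVert v n (polyline (n + 1) v (α 1)))) g c := by
  set A : ℝ := n / (n + 1) with hA
  -- `μ` locates `polyline (n + 1) v (α 1)` on the last edge; if `μ = 0` the right inverse
  -- `κ` below stops at `A` (as `x / 0 = 0`) and the new curve is constant on `[A, 1]`.
  set μ : ℝ := (n + 1) * α 1 - n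
  have hn : (0:ℝ) < n + 1 := by positivity
  have hA0 : 0 ≤ A := by positivity
  have hA1 : A ≤ 1 := div_le_one_of_le₀ (by linarith) hn.le
  have hnA : (n + 1) * A = n := by rw [hA]; field_simp
  have hμ : μ ∈ Icc (0:ℝ) 1 := by constructor <;> nlinarith [hα1.1, hα1.2]
  have hα1μ : α 1 = A + μ * (1 - A) := by
    simp only [μ]
    linear_combination (α 1 - 1) * hnA
  rw [polyline_succ_eq_lineMap v n hα1]
  refine hm.of_comp_rightInverse hαc hαm hα0 (η := fun p => min p A + μ * max (p - A) 0)
    (κ := fun x => min x A + max (x - A) 0 / μ) (fun p hp => polyline_subVert_lineMap v n hμ hp)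
    (fun a b hab => add_le_add (min_le_min hab le_rfl)
      (mul_le_mul_of_nonneg_left (max_le_max (by linarith) le_rfl) hμ.1))
    (by simp [min_eq_right hA1, max_eq_left (sub_nonneg.2 hA1), hα1μ]) (by fun_prop)
    (fun a b hab => add_le_add (min_le_min hab le_rfl)
      (div_le_div_of_nonneg_right (max_le_max (by linarith) le_rfl) hμ.1))
    (by simp [hA0]) ?_ fun x hx => ?_
  · rcases hμ.1.eq_or_lt with hμ0 | hμ0
    · simp [← hμ0, hA1]
    · rw [hα1μ, min_eq_right (by nlinarith), max_eq_left (by nlinarith)]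
      rw [add_sub_cancel_left, mul_div_cancel_left₀ _ hμ0.ne']
      linarith
  · rcases le_or_gt x A with hxA | hxA
    · simp [min_eq_left hxA, max_eq_right (sub_nonpos.2 hxA)]
    · have hμ0 : 0 < μ := by
        by_contra! hμ0
        nlinarith [hx.2, hμ.1]
      have hq : 0 ≤ (x - A) / μ := div_nonneg (by linarith) hμ0.le
      simp only [min_eq_right hxA.le, max_eq_left (by linarith : 0 ≤ x - A)]
      rw [min_eq_right (by linarith), max_eq_left (by linarith), add_sub_cancel_left,
        mul_div_cancel₀ _ hμ0.ne']
      ring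

theorem matchableWithin_prefix_of_le {n m : ℕ} {v w : ℕ → E} {c : ℝ} {φ ψ : ℝ → ℝ}
    (hφ : IsReparam φ) (hψ : IsReparam ψ)
    (hc : ∀ t ∈ Icc (0:ℝ) 1, dist (polyline (n + 1) v (φ t)) (polyline (m + 1) w (ψ t)) ≤ c)
    {T : ℝ} (hT : T ∈ Icc (0:ℝ) 1) (hφT : φ T = n / (n + 1)) (hψT : (m / (m + 1) : ℝ) ≤ ψ T) :
    MatchableWithin (polyline n v)
      (polyline (m + 1) (subVert w m (polyline (m + 1) w (ψ T)))) c := by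
  have hscaled : ∀ {χ : ℝ → ℝ}, IsReparam χ → Continuous (fun t => χ (t * T)) ∧
      Monotone (fun t => χ (t * T)) ∧ χ (0 * T) = 0 := fun hχ =>
    ⟨hχ.1.comp (by fun_prop), fun a b hab => hχ.2.1 (mul_le_mul_of_nonneg_right hab hT.1),
      by simp [hχ.2.2.1]⟩
  obtain ⟨hφc, hφm, hφ0⟩ := hscaled hφ
  obtain ⟨hψc, hψm, hψ0⟩ := hscaled hψ
  have htrunc : MatchableWithin (polyline (n + 1) v ∘ fun t => φ (t * T))
      (polyline (m + 1) w ∘ fun t => ψ (t * T)) c :=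
    ⟨id, id, isReparam_id, isReparam_id, fun t ht =>
      hc _ ⟨mul_nonneg ht.1 hT.1, mul_le_one₀ ht.2 hT.1 hT.2⟩⟩
  have := (htrunc.of_polyline_succ_comp hφc hφm hφ0 (by simpa using hφT)).symm
    |>.of_polyline_succ_comp_subVert hψc hψm hψ0 (by simpa using ⟨hψT, (hψ.mapsTo hT).2⟩)
  simpa only [one_mul] using this.symm

theorem MatchableWithin.exists_prefix {n m : ℕ} {v w : ℕ → E} {c : ℝ}
    (h : MatchableWithin (polyline (n + 1) v) (polyline (m + 1) w) c) :
    (∃ y ∈ segment ℝ (w m) (w (m + 1)),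
        MatchableWithin (polyline n v) (polyline (m + 1) (subVert w m y)) c) ∨
      ∃ x ∈ segment ℝ (v n) (v (n + 1)),
        MatchableWithin (polyline (n + 1) (subVert v n x)) (polyline m w) c := by
  obtain ⟨φ, ψ, hφ, hψ, hc⟩ := h
  have hfrac : ∀ k : ℕ, (k / (k + 1) : ℝ) ∈ Icc (0:ℝ) 1 := fun k =>
    ⟨by positivity, div_le_one_of_le₀ (by linarith) (by positivity)⟩
  obtain ⟨T, hT, hφT⟩ := hφ.surjOn (hfrac n)
  obtain ⟨T', hT', hψT'⟩ := hψ.surjOn (hfrac m)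
  by_cases hψT : (m / (m + 1) : ℝ) ≤ ψ T
  · exact .inl ⟨_, polyline_succ_mem_segment w m ⟨hψT, (hψ.mapsTo hT).2⟩,
      matchableWithin_prefix_of_le hφ hψ hc hT hφT hψT⟩
  · have hTT' : T ≤ T' := (hψ.2.1.reflect_lt (hψT'.symm ▸ not_le.1 hψT)).le
    have hφT' : (n / (n + 1) : ℝ) ≤ φ T' := hφT ▸ hφ.2.1 hTT'
    exact .inr ⟨_, polyline_succ_mem_segment v n ⟨hφT', (hφ.mapsTo hT').2⟩,
      (matchableWithin_prefix_of_le hψ hφ (fun t ht => dist_comm (polyline (n + 1) v (φ t)) _ ▸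
        hc t ht) hT' hψT' hφT').symm⟩

theorem MatchableWithin.exists_prefix_subVert {n m : ℕ} {v w : ℕ → E} {x y : E} {c : ℝ}
    (h : MatchableWithin (polyline (n + 1) (subVert v n x)) (polyline (m + 1) (subVert w m y)) c)
    (hx : x ∈ segment ℝ (v n) (v (n + 1))) (hy : y ∈ segment ℝ (w m) (w (m + 1))) :
    (∃ y ∈ segment ℝ (w m) (w (m + 1)),
        MatchableWithin (polyline n v) (polyline (m + 1) (subVert w m y)) c) ∨
      ∃ x ∈ segment ℝ (v n) (v (n + 1)),
        MatchableWithin (polyline (n + 1) (subVert v n x)) (polyline m w) c := by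
  rcases h.exists_prefix with ⟨y', hy', h'⟩ | ⟨x', hx', h'⟩
  · rw [subVert_of_le w y le_rfl, subVert_succ] at hy'
    rw [polyline_subVert, subVert_subVert] at h'
    exact .inl ⟨y', (convex_segment _ _).segment_subset (left_mem_segment ℝ _ _) hy hy', h'⟩
  · rw [subVert_of_le v x le_rfl, subVert_succ] at hx'
    rw [polyline_subVert, subVert_subVert] at h'
    exact .inr ⟨x', (convex_segment _ _).segment_subset (left_mem_segment ℝ _ _) hx hx', h'⟩

end Prefix

theorem isCompact_segment {E : Type*} [NormedAddCommGroup E] [NormedSpace ℝ E] (a b : E) :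
    IsCompact (segment ℝ a b) :=
  segment_eq_image_lineMap ℝ a b ▸ isCompact_Icc.image lineMap_continuous

theorem IsCompact.exists_gt_forall_le {X : Type*} [TopologicalSpace X] {K : Set X} {f : X → ℝ}
    {δ : ℝ} (hK : IsCompact K) (hf : ContinuousOn f K) (hδ : ∀ z ∈ K, δ < f z) :
    ∃ r, δ < r ∧ ∀ z ∈ K, r ≤ f z := by
  rcases K.eq_empty_or_nonempty with rfl | hne
  · exact ⟨δ + 1, by linarith, by simp⟩
  obtain ⟨z, hz, hmin⟩ := hK.exists_isMinOn hne hf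
  exact ⟨f z, hδ z hz, fun z' hz' => hmin hz'⟩

/-- if the reachability intervals `R_i[j]` (on edge `w j w(j+1)`) and
`R'_j[i]` (on edge `v i v(i+1)`) are both empty, then `R_{i+1}[j]` and `R'_{j+1}[i]`
are both empty. -/
theorem empty_reach_propagates {d : ℕ} (v w : ℕ → EuclideanSpace ℝ (Fin d))
    (i j : ℕ) (δ : ℝ)
    (hR : ∀ y ∈ segment ℝ (w j) (w (j+1)),
        ¬ frechetDist (polyline i v) (polyline (j+1) (subVert w j y)) ≤ δ)
    (hR' : ∀ x ∈ segment ℝ (v i) (v (i+1)),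
        ¬ frechetDist (polyline (i+1) (subVert v i x)) (polyline j w) ≤ δ) :
    (∀ y ∈ segment ℝ (w j) (w (j+1)),
        ¬ frechetDist (polyline (i+1) v) (polyline (j+1) (subVert w j y)) ≤ δ) ∧
    (∀ x ∈ segment ℝ (v i) (v (i+1)),
        ¬ frechetDist (polyline (i+1) (subVert v i x)) (polyline (j+1) w) ≤ δ) := by
  obtain ⟨r, hδr, hr⟩ := (isCompact_segment _ _).exists_gt_forall_le
    (continuous_frechetDist_polyline_subVert i v j w).continuousOn fun y hy => not_le.1 (hR y hy)
  obtain ⟨r', hδr', hr'⟩ := (isCompact_segment _ _).exists_gt_forall_le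
    (continuous_frechetDist_subVert_polyline i v j w).continuousOn fun x hx => not_le.1 (hR' x hx)
  have hreach : ∀ x ∈ segment ℝ (v i) (v (i+1)), ∀ y ∈ segment ℝ (w j) (w (j+1)),
      min r r' ≤ frechetDist (polyline (i+1) (subVert v i x)) (polyline (j+1) (subVert w j y)) :=
    fun x hx y hy => le_frechetDist (exists_matchableWithin_polyline _ _ _ _) fun c hc h => by
      rcases h.exists_prefix_subVert hx hy with ⟨y', hy', h'⟩ | ⟨x', hx', h'⟩
      · exact (min_le_left _ _).trans ((hr y' hy').trans (frechetDist_le h' hc))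
      · exact (min_le_right _ _).trans ((hr' x' hx').trans (frechetDist_le h' hc))
  have hδ : δ < min r r' := lt_min hδr hδr'
  refine ⟨fun y hy h => ?_, fun x hx h => ?_⟩
  · have := hreach _ (right_mem_segment ℝ _ _) y hy
    rw [polyline_subVert_succ] at this
    linarith
  · have := hreach x hx _ (right_mem_segment ℝ _ _)
    rw [polyline_subVert_succ] at this
    linarith
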